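/- Let G be a finite DAG and let U be a subset of its roots. Let G' be obtained from G by adding one new root vertex H as a parent of a set Z of vertices of G, where Z ∩ U = ∅. Let π be a U-constrained elimination order for G with width w (on the moral graph of G), and let π' be the U-constrained elimination order for G' obtained from π by inserting H just before the vertices of U. Then the width w' of π' (on the moral graph of G') satisfies w' ≤ max(w + 1, |U|). Moreover, if H has a single child in G' (i.e., |Z| = 1), then w' ≤ w + 1. -/

import Mathlib

/-! Preliminaries: vertex elimination, elimination orders, clusters, width,
moral graphs of DAGs. -/

variable {V : Type*}

/-- Eliminating a vertex `v` from a simple graph: connect every pair of neighbors of `v`,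
then delete `v` (here: make `v` isolated, keeping the vertex type). -/
def elimVertex (G : SimpleGraph V) (v : V) : SimpleGraph V where
  Adj x y := x ≠ y ∧ x ≠ v ∧ y ≠ v ∧ (G.Adj x y ∨ (G.Adj x v ∧ G.Adj y v))
  symm := by
    constructor
    rintro x y ⟨hxy, hxv, hyv, h⟩
    exact ⟨hxy.symm, hyv, hxv, h.imp (fun a => a.symm) And.symm⟩
  loopless := by constructor; rintro x ⟨h, -⟩; exact h rfl

/-- Eliminating a list of vertices successively. -/
def elimList (G : SimpleGraph V) (l : List V) : SimpleGraph V := l.foldl elimVertex G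

/-- The cluster of the `i`-th vertex of an elimination order `π`: the vertex together
with its neighbors in the graph just before it is eliminated. -/
def cluster (G : SimpleGraph V) (π : List V) (i : Fin π.length) : Set V :=
  insert (π.get i) ((elimList G (π.take i)).neighborSet (π.get i))

/-- The width of an elimination order: the size of its largest cluster minus one. -/
noncomputable def orderWidth (G : SimpleGraph V) (π : List V) : ℕ :=
  (Finset.univ.sup fun i : Fin π.length => (cluster G π i).ncard) - 1

/-- An elimination order for a graph on `V`: a list of all vertices without duplicates. -/
def IsElimOrder (π : List V) : Prop := π.Nodup ∧ ∀ v : V, v ∈ π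

/-- A `U`-constrained elimination order: the vertices of `U` appear last. -/
def IsUConstrained (U : Set V) (π : List V) : Prop :=
  ∃ l₁ l₂, π = l₁ ++ l₂ ∧ (∀ v ∈ l₁, v ∉ U) ∧ (∀ v ∈ l₂, v ∈ U)

/-- Acyclicity of a directed graph given by an edge (parent) relation `E`. -/
def IsAcyclicDigraph (E : V → V → Prop) : Prop := ∀ v, ¬ Relation.TransGen E v v

/-- A root of a DAG: a vertex with no parents. -/
def IsRoot (E : V → V → Prop) (v : V) : Prop := ∀ u, ¬ E u v

/-- The moral graph of a DAG: edge between distinct vertices iff one is a parent of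
the other or they have a common child. -/
def MoralGraph (E : V → V → Prop) : SimpleGraph V where
  Adj x y := x ≠ y ∧ (E x y ∨ E y x ∨ ∃ z, E x z ∧ E y z)
  symm := by
    constructor
    rintro x y ⟨hxy, h⟩
    exact ⟨hxy.symm, by tauto⟩
  loopless := by constructor; rintro x ⟨h, -⟩; exact h rfl

/-- Adding a new root vertex (`none`) as a parent of the vertices in `Z`. -/
def addRootE (E : V → V → Prop) (Z : Set V) : Option V → Option V → Prop :=
  fun x y => (∃ a b, E a b ∧ x = some a ∧ y = some b) ∨ (x = none ∧ ∃ b ∈ Z, y = some b)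


section Aux
variable {V : Type*}

lemma elimVertex_adj {G : SimpleGraph V} {v x y : V} :
    (elimVertex G v).Adj x y ↔
      x ≠ y ∧ x ≠ v ∧ y ≠ v ∧ (G.Adj x y ∨ (G.Adj x v ∧ G.Adj y v)) := Iff.rfl

lemma elimList_cons {G : SimpleGraph V} {a : V} {l : List V} :
    elimList G (a :: l) = elimList (elimVertex G a) l := rfl

lemma elimList_append {G : SimpleGraph V} {l₁ l₂ : List V} :
    elimList G (l₁ ++ l₂) = elimList (elimList G l₁) l₂ := List.foldl_append ..

lemma isolated_elimVertex {G : SimpleGraph V} {v : V} (h : ∀ y, ¬ G.Adj v y) (u : V) :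
    ∀ y, ¬ (elimVertex G u).Adj v y := by
  rintro y ⟨-, -, -, h' | ⟨h', -⟩⟩ <;> exact h _ h'

lemma isolated_elimList {G : SimpleGraph V} {v : V} (h : ∀ y, ¬ G.Adj v y) (l : List V) :
    ∀ y, ¬ (elimList G l).Adj v y := by
  induction l generalizing G with
  | nil => exact h
  | cons a l ih => exact ih (isolated_elimVertex h a)

lemma self_isolated_elimVertex (G : SimpleGraph V) (v : V) :
    ∀ y, ¬ (elimVertex G v).Adj v y := by rintro y ⟨-, h, -⟩; exact h rfl

lemma mem_isolated_elimList {G : SimpleGraph V} {v : V} {l : List V} (h : v ∈ l) :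
    ∀ y, ¬ (elimList G l).Adj v y := by
  induction l generalizing G with
  | nil => cases h
  | cons a l ih =>
    rcases List.mem_cons.mp h with rfl | h
    · exact isolated_elimList (self_isolated_elimVertex G v) l
    · exact ih h

/-- `G'` on `Option V` agrees with `G` on `V` on pairs of `some`s. -/
def Agrees (G' : SimpleGraph (Option V)) (G : SimpleGraph V) : Prop :=
  ∀ a b, G'.Adj (some a) (some b) ↔ G.Adj a b

lemma Agrees.elimVertex' {G' : SimpleGraph (Option V)} {G : SimpleGraph V}
    (h : Agrees G' G) (v : V) :
    Agrees (elimVertex G' (some v)) (elimVertex G v) := by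
  intro a b
  simp only [elimVertex_adj, ne_eq, Option.some.injEq, h a b, h a v, h b v]

lemma Agrees.elimList' {G' : SimpleGraph (Option V)} {G : SimpleGraph V}
    (h : Agrees G' G) (l : List V) :
    Agrees (elimList G' (l.map some)) (elimList G l) := by
  induction l generalizing G G' with
  | nil => exact h
  | cons a l ih => exact ih (h.elimVertex' a)

end Aux

section Aux2
variable {V : Type*}

lemma moralGraph_adj {E : V → V → Prop} {x y : V} :
    (MoralGraph E).Adj x y ↔ x ≠ y ∧ (E x y ∨ E y x ∨ ∃ z, E x z ∧ E y z) := Iff.rfl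

lemma addRootE_some_some {E : V → V → Prop} {Z : Set V} {a b : V} :
    addRootE E Z (some a) (some b) ↔ E a b := by
  simp [addRootE]

lemma addRootE_not_none {E : V → V → Prop} {Z : Set V} {x : Option V} :
    ¬ addRootE E Z x none := by
  rintro (⟨a, b, -, -, h⟩ | ⟨-, b, -, h⟩) <;> cases h

lemma moral_agrees {E : V → V → Prop} {Z : Set V} :
    Agrees (MoralGraph (addRootE E Z)) (MoralGraph E) := by
  intro a b
  simp only [moralGraph_adj, ne_eq, Option.some.injEq, addRootE_some_some]
  refine and_congr_right fun _ => or_congr_right (or_congr_right ?_)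
  constructor
  · rintro ⟨z, h1, h2⟩
    match z, h1, h2 with
    | some c, h1, h2 => exact ⟨c, addRootE_some_some.mp h1, addRootE_some_some.mp h2⟩
    | none, h1, h2 => exact absurd h1 addRootE_not_none
  · rintro ⟨c, h1, h2⟩
    exact ⟨some c, addRootE_some_some.mpr h1, addRootE_some_some.mpr h2⟩

/-- Adjacency of the new root in the moral graph of the extended DAG. -/
lemma moral_none_adj {E : V → V → Prop} {Z : Set V} {x : Option V} :
    (MoralGraph (addRootE E Z)).Adj none x ↔ ∃ b, x = some b ∧ (b ∈ Z ∨ ∃ c ∈ Z, E b c) := by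
  constructor
  · rintro ⟨hne, h | h | ⟨z, h1, h2⟩⟩
    · rcases h with ⟨a, b, -, h, -⟩ | ⟨-, b, hb, hx⟩
      · cases h
      · exact ⟨b, hx, Or.inl hb⟩
    · exact absurd h addRootE_not_none
    · match z, h1, h2 with
      | some c, h1, h2 =>
        rcases h1 with ⟨a, b, -, h, -⟩ | ⟨-, b, hb, hc⟩
        · cases h
        · cases hc
          match x, h2 with
          | some d, h2 =>
            exact ⟨d, rfl, Or.inr ⟨c, hb, addRootE_some_some.mp h2⟩⟩
          | none, h2 => exact absurd rfl hne
      | none, h1, h2 => exact absurd h1 addRootE_not_none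
  · rintro ⟨b, rfl, hb | ⟨c, hc, hbc⟩⟩
    · exact ⟨by simp, Or.inl (Or.inr ⟨rfl, b, hb, rfl⟩)⟩
    · exact ⟨by simp, Or.inr (Or.inr ⟨some c, Or.inr ⟨rfl, c, hc, rfl⟩,
        addRootE_some_some.mpr hbc⟩)⟩

/-- The clique property of the neighborhood of `none` is preserved by eliminating a
`some` vertex. -/
lemma clique_elimVertex {G' : SimpleGraph (Option V)}
    (h : G'.IsClique (G'.neighborSet none)) (v : V) :
    (elimVertex G' (some v)).IsClique ((elimVertex G' (some v)).neighborSet none) := by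
  intro x hx y hy hxy
  obtain ⟨hx1, hx2, hx3, hx4⟩ := hx
  obtain ⟨hy1, hy2, hy3, hy4⟩ := hy
  refine ⟨hxy, hx3, hy3, ?_⟩
  rcases hx4 with hx4 | ⟨hnv, hxv⟩
  · rcases hy4 with hy4 | ⟨hnv, hyv⟩
    · exact Or.inl (h hx4 hy4 hxy)
    · exact Or.inr ⟨h hx4 hnv hx3, hyv⟩
  · rcases hy4 with hy4 | ⟨hnv, hyv⟩
    · exact Or.inr ⟨hxv, h hy4 hnv hy3⟩
    · exact Or.inr ⟨hxv, hyv⟩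

lemma clique_elimList {G' : SimpleGraph (Option V)}
    (h : G'.IsClique (G'.neighborSet none)) (l : List V) :
    (elimList G' (l.map some)).IsClique ((elimList G' (l.map some)).neighborSet none) := by
  induction l generalizing G' with
  | nil => exact h
  | cons a l ih => exact ih (clique_elimVertex h a)

lemma Agrees.elimNone {G' : SimpleGraph (Option V)} {G : SimpleGraph V}
    (h : Agrees G' G) (hcl : G'.IsClique (G'.neighborSet none)) :
    Agrees (elimVertex G' none) G := by
  intro a b
  rw [← h a b]
  constructor
  · rintro ⟨hab, -, -, h' | ⟨h1, h2⟩⟩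
    · exact h'
    · exact hcl h1.symm h2.symm (by simpa using hab)
  · intro hab
    exact ⟨hab.ne, by simp, by simp, Or.inl hab⟩

end Aux2

section Aux3
variable {V : Type*}

lemma adj_elimVertex_of_adj {G : SimpleGraph V} {x y v : V} (hx : x ≠ v) (hy : y ≠ v)
    (h : G.Adj x y) : (elimVertex G v).Adj x y := ⟨h.ne, hx, hy, Or.inl h⟩

/-- A clique whose vertices all appear in the remaining elimination list is contained
in some cluster of that list. -/
lemma clique_subset_cluster {m : List V} {G : SimpleGraph V} {K : Set V}
    (hcl : G.IsClique K) (hmem : ∀ x ∈ K, x ∈ m) (hne : K.Nonempty) :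
    ∃ j : Fin m.length,
      K ⊆ insert (m.get j) ((elimList G (m.take j)).neighborSet (m.get j)) := by
  induction m generalizing G with
  | nil => obtain ⟨x, hx⟩ := hne; exact absurd (hmem x hx) List.not_mem_nil
  | cons a m ih =>
    by_cases ha : a ∈ K
    · refine ⟨⟨0, Nat.succ_pos _⟩, fun x hx => ?_⟩
      rcases eq_or_ne x a with rfl | hxa
      · exact Set.mem_insert _ _
      · exact Set.mem_insert_of_mem _ (hcl ha hx hxa.symm)
    · have hcl' : (elimVertex G a).IsClique K := by
        intro x hx y hy hxy
        exact adj_elimVertex_of_adj (fun h => ha (h ▸ hx)) (fun h => ha (h ▸ hy))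
          (hcl hx hy hxy)
      have hmem' : ∀ x ∈ K, x ∈ m := by
        intro x hx
        rcases List.mem_cons.mp (hmem x hx) with rfl | h
        · exact absurd hx ha
        · exact h
      obtain ⟨j, hj⟩ := ih hcl' hmem' 
      exact ⟨j.succ, hj⟩

lemma cluster_ncard_le (G : SimpleGraph V) (π : List V) (i : Fin π.length) :
    (cluster G π i).ncard ≤ orderWidth G π + 1 := by
  have h : (cluster G π i).ncard ≤
      Finset.univ.sup fun i : Fin π.length => (cluster G π i).ncard :=
    Finset.le_sup (f := fun i : Fin π.length => (cluster G π i).ncard) (Finset.mem_univ i)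
  unfold orderWidth
  omega

lemma orderWidth_le {G : SimpleGraph V} {π : List V} {M : ℕ}
    (h : ∀ i : Fin π.length, (cluster G π i).ncard ≤ M + 1) : orderWidth G π ≤ M := by
  have h2 : (Finset.univ.sup fun i : Fin π.length => (cluster G π i).ncard) ≤ M + 1 :=
    Finset.sup_le (fun i _ => h i)
  unfold orderWidth
  omega

end Aux3

section Phases
variable {V : Type*} [Finite V]

instance : Finite (Option V) := by
  haveI := Fintype.ofFinite V; exact inferInstance

set_option linter.unusedSectionVars false

lemma cluster_eq (G : SimpleGraph V) (π : List V) (i : ℕ) (h : i < π.length) :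
    cluster G π ⟨i, h⟩ =
      insert (π[i]'h) ((elimList G (π.take i)).neighborSet (π[i]'h)) := rfl

lemma ncard_le_of_subset_insert_image {s : Set (Option V)} {t : Set V}
    (h : s ⊆ insert none (some '' t)) : s.ncard ≤ t.ncard + 1 := by
  calc s.ncard ≤ (insert none (some '' t)).ncard :=
        Set.ncard_le_ncard h (Set.toFinite _)
    _ ≤ (some '' t).ncard + 1 := Set.ncard_insert_le _ _
    _ = t.ncard + 1 := by rw [Set.ncard_image_of_injective _ (Option.some_injective V)]

lemma ncard_le_of_subset_image {s : Set (Option V)} {t : Set V}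
    (h : s ⊆ some '' t) : s.ncard ≤ t.ncard := by
  calc s.ncard ≤ (some '' t).ncard := Set.ncard_le_ncard h (Set.toFinite _)
    _ = t.ncard := Set.ncard_image_of_injective _ (Option.some_injective V)

/-- Phase 1: clusters of `l₁`-vertices grow by at most the new root. -/
lemma ph1 {G' : SimpleGraph (Option V)} {G : SimpleGraph V}
    (hag : Agrees G' G) (l₁ l₂ : List V) (i : ℕ) (hi : i < l₁.length)
    (hi' : i < (l₁.map some ++ [(none : Option V)] ++ l₂.map some).length)
    (hi'' : i < (l₁ ++ l₂).length) :
    (cluster G' (l₁.map some ++ [(none : Option V)] ++ l₂.map some) ⟨i, hi'⟩).ncard ≤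
      (cluster G (l₁ ++ l₂) ⟨i, hi''⟩).ncard + 1 := by
  have hi1 : i < (l₁.map some ++ [(none : Option V)]).length := by simp; omega
  have hi2 : i < (l₁.map some).length := by simpa using hi
  have hget : (l₁.map some ++ [(none : Option V)] ++ l₂.map some)[i]'hi'
      = some (l₁[i]'hi) := by
    rw [List.getElem_append_left hi1, List.getElem_append_left hi2, List.getElem_map]
  have htake : (l₁.map some ++ [(none : Option V)] ++ l₂.map some).take i
      = (l₁.take i).map some := by
    rw [List.take_append_of_le_length (by simp; omega),
        List.take_append_of_le_length (by simpa using hi.le), ← List.map_take]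
  have hgetG : (l₁ ++ l₂)[i]'hi'' = l₁[i]'hi := List.getElem_append_left hi
  have htakeG : (l₁ ++ l₂).take i = l₁.take i := List.take_append_of_le_length hi.le
  have hag' := hag.elimList' (l₁.take i)
  apply ncard_le_of_subset_insert_image
  rw [cluster_eq, hget, htake, cluster_eq, hgetG, htakeG]
  intro x hx
  rcases Set.mem_insert_iff.mp hx with rfl | hx
  · exact Set.mem_insert_of_mem _ ⟨_, Set.mem_insert _ _, rfl⟩
  · match x, hx with
    | none, hx => exact Set.mem_insert _ _
    | some b, hx =>
      exact Set.mem_insert_of_mem _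
        ⟨b, Set.mem_insert_of_mem _ ((hag' _ _).mp hx), rfl⟩
end Phases

section Phases2
variable {V : Type*} [Finite V]
set_option linter.unusedSectionVars false

lemma pi'_get_t (l₁ l₂ : List V)
    (h : l₁.length < (l₁.map some ++ [(none : Option V)] ++ l₂.map some).length) :
    (l₁.map some ++ [(none : Option V)] ++ l₂.map some)[l₁.length]'h = none := by
  rw [List.getElem_append_left (by simp), List.getElem_append_right (by simp)]
  simp

lemma pi'_take_t (l₁ l₂ : List V) :
    (l₁.map some ++ [(none : Option V)] ++ l₂.map some).take l₁.length
      = l₁.map some := by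
  rw [List.take_append_of_le_length (by simp), List.take_append_of_le_length (by simp),
      ← List.map_take, List.take_length]

lemma pi'_get_j (l₁ l₂ : List V) (j : ℕ) (hj : j < l₂.length)
    (h : l₁.length + 1 + j < (l₁.map some ++ [(none : Option V)] ++ l₂.map some).length) :
    (l₁.map some ++ [(none : Option V)] ++ l₂.map some)[l₁.length + 1 + j]'h
      = some (l₂[j]'hj) := by
  rw [List.getElem_append_right (by simp)]
  have : l₁.length + 1 + j - (l₁.map some ++ [(none : Option V)]).length = j := by
    simp
  simp_rw [this]
  simp

lemma pi'_take_j (l₁ l₂ : List V) (j : ℕ) :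
    (l₁.map some ++ [(none : Option V)] ++ l₂.map some).take (l₁.length + 1 + j)
      = l₁.map some ++ [(none : Option V)] ++ (l₂.take j).map some := by
  rw [show l₁.length + 1 + j = (l₁.map some ++ [(none : Option V)]).length + j by simp,
      List.take_append, ← List.map_take]
  rw [List.take_of_length_le (by simp), Nat.add_sub_cancel_left]

lemma pi_get_j (l₁ l₂ : List V) (j : ℕ) (hj : j < l₂.length)
    (h : l₁.length + j < (l₁ ++ l₂).length) :
    (l₁ ++ l₂)[l₁.length + j]'h = l₂[j]'hj := by
  rw [List.getElem_append_right (by omega)]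
  simp

lemma pi_take_j (l₁ l₂ : List V) (j : ℕ) :
    (l₁ ++ l₂).take (l₁.length + j) = l₁ ++ l₂.take j := by
  rw [List.take_append]
  simp

/-- Phase H, generic bound: the cluster of the new root consists of `none` and
surviving vertices, which all lie in `l₂`. -/
lemma phH1 {G' : SimpleGraph (Option V)} (l₁ l₂ : List V) (U : Set V)
    (hall : ∀ v : V, v ∈ l₁ ++ l₂) (h₂ : ∀ v ∈ l₂, v ∈ U)
    (h : l₁.length < (l₁.map some ++ [(none : Option V)] ++ l₂.map some).length) :
    (cluster G' (l₁.map some ++ [(none : Option V)] ++ l₂.map some)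
      ⟨l₁.length, h⟩).ncard ≤ U.ncard + 1 := by
  apply ncard_le_of_subset_insert_image
  rw [cluster_eq, pi'_get_t, pi'_take_t]
  intro x hx
  rcases Set.mem_insert_iff.mp hx with rfl | hx
  · exact Set.mem_insert _ _
  · match x, hx with
    | none, hx => exact Set.mem_insert _ _
    | some b, hx =>
      have hx' : (elimList G' (l₁.map some)).Adj none (some b) := hx
      have hb : b ∉ l₁ := fun hb =>
        mem_isolated_elimList (List.mem_map_of_mem (f := some) hb) none hx'.symm
      have hbl₂ : b ∈ l₂ := (List.mem_append.mp (hall b)).resolve_left hb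
      exact Set.mem_insert_of_mem _ ⟨b, h₂ b hbl₂, rfl⟩

/-- Phase 2, generic bound: clusters of `l₂`-vertices lie in `some '' U`. -/
lemma ph2a {G' : SimpleGraph (Option V)} (l₁ l₂ : List V) (U : Set V)
    (hall : ∀ v : V, v ∈ l₁ ++ l₂) (h₂ : ∀ v ∈ l₂, v ∈ U) (j : ℕ) (hj : j < l₂.length)
    (h : l₁.length + 1 + j < (l₁.map some ++ [(none : Option V)] ++ l₂.map some).length) :
    (cluster G' (l₁.map some ++ [(none : Option V)] ++ l₂.map some)
      ⟨l₁.length + 1 + j, h⟩).ncard ≤ U.ncard := by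
  apply ncard_le_of_subset_image
  rw [cluster_eq, pi'_get_j l₁ l₂ j hj, pi'_take_j]
  intro x hx
  rcases Set.mem_insert_iff.mp hx with rfl | hx
  · exact ⟨l₂[j], h₂ _ (List.getElem_mem hj), rfl⟩
  · match x, hx with
    | none, hx =>
      exact absurd (SimpleGraph.Adj.symm hx)
        (mem_isolated_elimList (by simp) (some (l₂[j]'hj)))
    | some b, hx =>
      have hx' : (elimList G' _).Adj (some (l₂[j]'hj)) (some b) := hx
      have hb : b ∉ l₁ := fun hb =>
        mem_isolated_elimList (l := l₁.map some ++ [(none : Option V)] ++ (l₂.take j).map some)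
          (by simp [hb]) _ hx'.symm
      have hbl₂ : b ∈ l₂ := (List.mem_append.mp (hall b)).resolve_left hb
      exact ⟨b, h₂ b hbl₂, rfl⟩

end Phases2

section Phases3
variable {V : Type*} [Finite V]
set_option linter.unusedSectionVars false

/-- Phase H with a single child: the cluster of the new root is `none` together with a
clique of survivors, which is contained in a later cluster of the original order. -/
lemma phH2 {G' : SimpleGraph (Option V)} {G : SimpleGraph V} {w : ℕ}
    (hag : Agrees G' G) (l₁ l₂ : List V)
    (hall : ∀ v : V, v ∈ l₁ ++ l₂)
    (hcl : (elimList G' (l₁.map some)).IsClique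
      ((elimList G' (l₁.map some)).neighborSet none))
    (hwb : ∀ i : Fin (l₁ ++ l₂).length, (cluster G (l₁ ++ l₂) i).ncard ≤ w + 1)
    (h : l₁.length < (l₁.map some ++ [(none : Option V)] ++ l₂.map some).length) :
    (cluster G' (l₁.map some ++ [(none : Option V)] ++ l₂.map some)
      ⟨l₁.length, h⟩).ncard ≤ w + 2 := by
  have hagt := hag.elimList' l₁
  set Gt' := elimList G' (l₁.map some) with hGt'
  set K₀ : Set V := {b | Gt'.Adj none (some b)} with hK₀
  have hK' : Gt'.neighborSet none = some '' K₀ := by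
    ext x
    constructor
    · intro hx
      match x, hx with
      | none, hx => exact absurd hx (Gt'.irrefl)
      | some b, hx => exact ⟨b, hx, rfl⟩
    · rintro ⟨b, hb, rfl⟩; exact hb
  have hK₀l₂ : ∀ b ∈ K₀, b ∈ l₂ := by
    intro b hb
    have hb1 : b ∉ l₁ := fun hbl =>
      mem_isolated_elimList (List.mem_map_of_mem (f := some) hbl) none
        (SimpleGraph.Adj.symm hb)
    exact (List.mem_append.mp (hall b)).resolve_left hb1
  have hK₀cl : (elimList G l₁).IsClique K₀ := by
    intro a ha b hb hab
    exact (hagt a b).mp (hcl ha hb (by simpa using hab))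
  rw [cluster_eq, pi'_get_t, pi'_take_t, ← hGt', hK']
  rcases K₀.eq_empty_or_nonempty with he | hne
  · rw [he]
    have h1 : (insert (none : Option V) (some '' (∅ : Set V))).ncard = 1 := by simp
    omega
  · obtain ⟨j, hj⟩ := clique_subset_cluster hK₀cl hK₀l₂ hne
    have hidx : l₁.length + j.val < (l₁ ++ l₂).length := by
      simp only [List.length_append]; omega
    have hsub : K₀ ⊆ cluster G (l₁ ++ l₂) ⟨l₁.length + j.val, hidx⟩ := by
      rw [cluster_eq, pi_get_j l₁ l₂ j.val j.isLt, pi_take_j, elimList_append]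
      simpa [List.get_eq_getElem] using hj
    have h1 : K₀.ncard ≤ w + 1 :=
      le_trans (Set.ncard_le_ncard hsub (Set.toFinite _)) (hwb _)
    have h2 := ncard_le_of_subset_insert_image
      (subset_refl (insert none (some '' K₀)))
    omega

/-- Phase 2 with a single child: after eliminating the root, the elimination of `l₂`
proceeds exactly as in the original graph. -/
lemma ph2b {G' : SimpleGraph (Option V)} {G : SimpleGraph V}
    (hag : Agrees G' G) (l₁ l₂ : List V)
    (hcl : (elimList G' (l₁.map some)).IsClique
      ((elimList G' (l₁.map some)).neighborSet none))
    (j : ℕ) (hj : j < l₂.length)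
    (h : l₁.length + 1 + j < (l₁.map some ++ [(none : Option V)] ++ l₂.map some).length)
    (hidx : l₁.length + j < (l₁ ++ l₂).length) :
    (cluster G' (l₁.map some ++ [(none : Option V)] ++ l₂.map some)
      ⟨l₁.length + 1 + j, h⟩).ncard ≤
      (cluster G (l₁ ++ l₂) ⟨l₁.length + j, hidx⟩).ncard + 1 := by
  have hagt := hag.elimList' l₁
  have hag2 : Agrees (elimVertex (elimList G' (l₁.map some)) none) (elimList G l₁) :=
    hagt.elimNone hcl
  have hag3 := hag2.elimList' (l₂.take j)
  have helim : elimList G' (l₁.map some ++ [(none : Option V)] ++ (l₂.take j).map some)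
      = elimList (elimVertex (elimList G' (l₁.map some)) none) ((l₂.take j).map some) := by
    rw [elimList_append, elimList_append]
    rfl
  apply ncard_le_of_subset_insert_image
  rw [cluster_eq, pi'_get_j l₁ l₂ j hj, pi'_take_j, helim, cluster_eq,
    pi_get_j l₁ l₂ j hj, pi_take_j, elimList_append]
  intro x hx
  rcases Set.mem_insert_iff.mp hx with rfl | hx
  · exact Set.mem_insert_of_mem _ ⟨_, Set.mem_insert _ _, rfl⟩
  · match x, hx with
    | none, hx => exact Set.mem_insert _ _
    | some b, hx =>
      exact Set.mem_insert_of_mem _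
        ⟨b, Set.mem_insert_of_mem _ ((hag3 _ _).mp hx), rfl⟩

end Phases3

/-- With a single child `z`, the neighborhood of the new root in the moral graph is
`{z} ∪ parents(z)`, which is a clique. -/
lemma base_clique {V : Type*} {E : V → V → Prop} {z : V} :
    (MoralGraph (addRootE E ({z} : Set V))).IsClique
      ((MoralGraph (addRootE E ({z} : Set V))).neighborSet none) := by
  intro x hx y hy hxy
  rw [SimpleGraph.mem_neighborSet, moral_none_adj] at hx hy
  obtain ⟨a, rfl, ha⟩ := hx
  obtain ⟨b, rfl, hb⟩ := hy
  have ha' : a = z ∨ E a z := by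
    rcases ha with h | ⟨c, hc, h⟩
    · exact Or.inl h
    · exact Or.inr (hc ▸ h)
  have hb' : b = z ∨ E b z := by
    rcases hb with h | ⟨c, hc, h⟩
    · exact Or.inl h
    · exact Or.inr (hc ▸ h)
  refine ⟨hxy, ?_⟩
  rcases ha' with rfl | haz
  · rcases hb' with rfl | hbz
    · exact absurd rfl hxy
    · exact Or.inr (Or.inl (addRootE_some_some.mpr hbz))
  · rcases hb' with rfl | hbz
    · exact Or.inl (addRootE_some_some.mpr haz)
    · exact Or.inr (Or.inr ⟨some z, addRootE_some_some.mpr haz,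
        addRootE_some_some.mpr hbz⟩)

/-- Let `G` be a finite DAG (edge relation `E` on `V`) and `U` a subset
of its roots. Let `G'` be obtained from `G` by adding one new root vertex `H` (here
`none`) as a parent of a set `Z` of vertices of `G`, where `Z ∩ U = ∅`. Let
`π = l₁ ++ l₂` be a `U`-constrained elimination order for `G` with width `w` (on the
moral graph of `G`), and let `π'` be the `U`-constrained elimination order for `G'`
obtained from `π` by inserting `H` just before the vertices of `U`. Then the width `w'`
of `π'` (on the moral graph of `G'`) satisfies `w' ≤ max (w + 1) |U|`. Moreover, if `H`
has a single child in `G'` (i.e. `|Z| = 1`), then `w' ≤ w + 1`. -/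
theorem stmt9 {V : Type*} [Fintype V] (E : V → V → Prop)
    (hdag : IsAcyclicDigraph E)
    (U : Set V) (hU : ∀ u ∈ U, IsRoot E u)
    (Z : Set V) (hZU : Z ∩ U = ∅)
    (l₁ l₂ : List V) (hπ : IsElimOrder (l₁ ++ l₂))
    (h₁ : ∀ v ∈ l₁, v ∉ U) (h₂ : ∀ v ∈ l₂, v ∈ U)
    (w : ℕ) (hw : orderWidth (MoralGraph E) (l₁ ++ l₂) = w) :
    orderWidth (MoralGraph (addRootE E Z))
        (l₁.map some ++ [(none : Option V)] ++ l₂.map some) ≤ max (w + 1) U.ncard ∧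
      (Z.ncard = 1 →
        orderWidth (MoralGraph (addRootE E Z))
          (l₁.map some ++ [(none : Option V)] ++ l₂.map some) ≤ w + 1) := by
  have hall := hπ.2
  have hag : Agrees (MoralGraph (addRootE E Z)) (MoralGraph E) := moral_agrees
  have hwb : ∀ i : Fin (l₁ ++ l₂).length,
      (cluster (MoralGraph E) (l₁ ++ l₂) i).ncard ≤ w + 1 := by
    intro i
    have := cluster_ncard_le (MoralGraph E) (l₁ ++ l₂) i
    omega
  have hlen : (l₁.map some ++ [(none : Option V)] ++ l₂.map some).length
      = l₁.length + 1 + l₂.length := by simp; omega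
  constructor
  · apply orderWidth_le
    rintro ⟨iv, hiv⟩
    rcases lt_trichotomy iv l₁.length with hlt | heq | hgt
    · have hi'' : iv < (l₁ ++ l₂).length := by
        simp only [List.length_append]; omega
      have hb1 := ph1 hag l₁ l₂ iv hlt hiv hi''
      have hb2 := hwb ⟨iv, hi''⟩
      omega
    · subst heq
      have hb1 := phH1 (G' := MoralGraph (addRootE E Z)) l₁ l₂ U hall h₂ hiv
      omega
    · obtain ⟨j, rfl⟩ : ∃ j, iv = l₁.length + 1 + j := ⟨iv - (l₁.length + 1), by omega⟩
      have hj : j < l₂.length := by rw [hlen] at hiv; omega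
      have hb1 := ph2a (G' := MoralGraph (addRootE E Z)) l₁ l₂ U hall h₂ j hj hiv
      omega
  · intro hZ
    obtain ⟨z, rfl⟩ := Set.ncard_eq_one.mp hZ
    have hclt := clique_elimList (base_clique (E := E) (z := z)) l₁
    apply orderWidth_le
    rintro ⟨iv, hiv⟩
    rcases lt_trichotomy iv l₁.length with hlt | heq | hgt
    · have hi'' : iv < (l₁ ++ l₂).length := by
        simp only [List.length_append]; omega
      have hb1 := ph1 hag l₁ l₂ iv hlt hiv hi''
      have hb2 := hwb ⟨iv, hi''⟩
      omega
    · subst heq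
      have hb1 := phH2 hag l₁ l₂ hall hclt hwb hiv
      omega
    · obtain ⟨j, rfl⟩ : ∃ j, iv = l₁.length + 1 + j := ⟨iv - (l₁.length + 1), by omega⟩
      have hj : j < l₂.length := by rw [hlen] at hiv; omega
      have hidx : l₁.length + j < (l₁ ++ l₂).length := by
        simp only [List.length_append]; omega
      have hb1 := ph2b hag l₁ l₂ hclt j hj hiv hidx
      have hb2 := hwb ⟨l₁.length + j, hidx⟩
      omega
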